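/- Backward conditional sampler correctness: in the Poisson–multinomial setting with independent categoricals ℓ_i ~ p_i on {1,…,d}, fix a target counts vector m with Σ_k m_k = ν and P(M = m) > 0. Define a sequential sampler that for i = ν down to 1 draws ℓ_i = k with probability q_i(k | m^(i)) = p_i(k) W^(i−1)_{m^(i) − e_k} / W^(i)_{m^(i)} and updates m^(i−1) = m^(i) − e_{ℓ_i}, starting from m^(ν) = m. Then (i) for each i, q_i(k | m^(i)) = P(ℓ_i = k | M^(i) = m^(i)); and (ii) the output sequence (ℓ₁,…,ℓ_ν) is distributed exactly as the conditional law of (ℓ₁,…,ℓ_ν) given M = m. -/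

import Mathlib

open Finset

/-- Counts vector of a finite sequence. -/
def countsOf {d i : ℕ} (ℓ : Fin i → Fin d) (k : Fin d) : ℕ :=
  (Finset.univ.filter fun j => ℓ j = k).card

/-- Forward DP for Poisson–multinomial prefix probabilities. -/
noncomputable def Wdp (d : ℕ) (p : ℕ → Fin d → ℝ) : ℕ → (Fin d → ℕ) → ℝ
  | 0, m => if m = fun _ => 0 then 1 else 0
  | i + 1, m =>
      ∑ k : Fin d, if m k = 0 then 0
        else p i k * Wdp d p i (Function.update m k (m k - 1))

/-- `P(M⁽ⁱ⁾ = m)`: probability that the counts vector of the length-`i` prefix equals `m`. -/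
noncomputable def prCounts (d : ℕ) (p : ℕ → Fin d → ℝ) (i : ℕ) (m : Fin d → ℕ) : ℝ :=
  ∑ ℓ : Fin i → Fin d,
    (∏ j : Fin i, p (j : ℕ) (ℓ j)) * (if ∀ k, countsOf ℓ k = m k then 1 else 0)

/-- `P(ℓ_{i+1} = k₀ ∧ M⁽ⁱ⁺¹⁾ = m)`. -/
noncomputable def prLastAndCounts (d : ℕ) (p : ℕ → Fin d → ℝ) (i : ℕ) (k₀ : Fin d)
    (m : Fin d → ℕ) : ℝ :=
  ∑ ℓ : Fin (i + 1) → Fin d,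
    (∏ j : Fin (i + 1), p (j : ℕ) (ℓ j)) *
      (if ℓ (Fin.last i) = k₀ ∧ ∀ k, countsOf ℓ k = m k then 1 else 0)

/-- The backward sampler's transition probability `q_{i+1}(k | m) =
p_{i+1}(k) W⁽ⁱ⁾_{m−e_k} / W⁽ⁱ⁺¹⁾_m` (zero when `m k = 0`). -/
noncomputable def qstep (d : ℕ) (p : ℕ → Fin d → ℝ) (i : ℕ) (k : Fin d)
    (m : Fin d → ℕ) : ℝ :=
  if m k = 0 then 0
  else p i k * Wdp d p i (Function.update m k (m k - 1)) / Wdp d p (i + 1) m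

/-- Counts vector of the first `t` entries of `ℓ : Fin ν → Fin d`. -/
def cntPrefix {d ν : ℕ} (ℓ : Fin ν → Fin d) (t : ℕ) (k : Fin d) : ℕ :=
  (Finset.univ.filter fun j : Fin ν => (j : ℕ) < t ∧ ℓ j = k).card


/-!
Splitting a sequence of length `i + 1` into its first `i` entries and its last entry shows that
`P(M⁽ⁱ⁾ = m)` obeys the forward recursion defining `W⁽ⁱ⁾_m`, and that
`P(ℓ_{i+1} = k, M⁽ⁱ⁺¹⁾ = m) = p_{i+1}(k) W⁽ⁱ⁾_{m - e_k}`; part (i) is then the definition of `q`.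
Along a sequence `ℓ` with counts vector `m` the product of the `q`'s telescopes to
`∏ p_i(ℓ_i) · W⁽⁰⁾_0 / W⁽ν⁾_m`. The intermediate `W`'s are nonzero because each dominates the weight
of the corresponding prefix of `ℓ`, unless some `p_i(ℓ_i)` vanishes, in which case both sides are `0`.
-/

lemma add_single_one_eq_iff {ι : Type*} [DecidableEq ι] (n m : ι → ℕ) (k : ι) :
    n + Pi.single k 1 = m ↔ m k ≠ 0 ∧ n = Function.update m k (m k - 1) := by
  constructor
  · rintro rfl
    refine ⟨by simp, funext fun k' => ?_⟩
    by_cases h : k' = k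
    · subst h; simp
    · simp [h]
  · rintro ⟨hk, rfl⟩
    funext k'
    by_cases h : k' = k
    · subst h
      rw [Pi.add_apply, Function.update_self, Pi.single_eq_same]
      omega
    · simp [h]

lemma sum_fun_fin_succ_eq_sum_snoc {α M : Type*} [Fintype α] [AddCommMonoid M]
    {n : ℕ} (f : (Fin (n + 1) → α) → M) :
    ∑ ℓ, f ℓ = ∑ k, ∑ g : Fin n → α, f (Fin.snoc g k) := by
  rw [← Fintype.sum_prod_type']
  exact (Fintype.sum_equiv (Fin.snocEquiv fun _ => α) _ _ fun _ => rfl).symm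

lemma prod_mul_div_telescope {K : Type*} [Semifield K] {n : ℕ} (a : Fin n → K) (W : ℕ → K)
    (hW : ∀ t ≤ n, W t ≠ 0) :
    ∏ i : Fin n, a i * W i / W (i + 1) = (∏ i, a i) * W 0 / W n := by
  induction n with
  | zero => simp [hW 0 le_rfl]
  | succ n ih =>
    simp only [Fin.prod_univ_castSucc, Fin.val_castSucc, Fin.val_last]
    rw [ih _ fun t ht => hW t (by omega)]
    field_simp [hW n (by omega)]

section Counts

variable {d : ℕ}

lemma countsOf_snoc {i : ℕ} (g : Fin i → Fin d) (k : Fin d) :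
    countsOf (Fin.snoc g k : Fin (i + 1) → Fin d) = countsOf g + Pi.single k 1 := by
  funext k'
  simp only [countsOf, card_filter, Fin.sum_univ_castSucc, Fin.snoc_castSucc, Fin.snoc_last,
    Pi.add_apply, Pi.single_apply, eq_comm]

lemma countsOf_castLE {ν t : ℕ} (ℓ : Fin ν → Fin d) (ht : t ≤ ν) :
    countsOf (fun j : Fin t => ℓ (Fin.castLE ht j)) = cntPrefix ℓ t := by
  funext k
  refine card_nbij (Fin.castLE ht) (fun j hj => ?_) (fun a _ b _ h => Fin.castLE_injective ht h)
    (fun j hj => ?_)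
  · simp_all
  · simp only [coe_filter, mem_univ, true_and, Set.mem_ofPred_eq] at hj
    exact ⟨⟨j, hj.1⟩, by simpa using hj.2, rfl⟩

lemma cntPrefix_zero {ν : ℕ} (ℓ : Fin ν → Fin d) : cntPrefix ℓ 0 = 0 := by
  funext k
  simp [cntPrefix]

lemma cntPrefix_self {ν : ℕ} (ℓ : Fin ν → Fin d) : cntPrefix ℓ ν = countsOf ℓ := by
  rw [← countsOf_castLE ℓ le_rfl]
  rfl

lemma cntPrefix_succ {ν : ℕ} (ℓ : Fin ν → Fin d) (i : Fin ν) :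
    cntPrefix ℓ (i + 1) = cntPrefix ℓ i + Pi.single (ℓ i) 1 := by
  rw [← countsOf_castLE ℓ i.isLt, ← countsOf_castLE ℓ i.isLt.le, ← countsOf_snoc]
  congr 1
  funext j
  refine Fin.lastCases ?_ (fun j => ?_) j
  · simp only [Fin.snoc_last]
    rfl
  · simp

end Counts

section Probabilities

variable {d : ℕ} (p : ℕ → Fin d → ℝ)

lemma prod_snoc_eq_prod_mul {i : ℕ} (g : Fin i → Fin d) (k : Fin d) :
    ∏ j : Fin (i + 1), p j ((Fin.snoc g k : Fin (i + 1) → Fin d) j) =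
      (∏ j : Fin i, p j (g j)) * p i k := by
  simp [Fin.prod_univ_castSucc]

lemma sum_snoc_weight_counts_eq (i : ℕ) (k : Fin d) (m : Fin d → ℕ) :
    ∑ g : Fin i → Fin d, (∏ j : Fin (i + 1), p j ((Fin.snoc g k : Fin (i + 1) → Fin d) j)) *
        (if ∀ k', countsOf (Fin.snoc g k : Fin (i + 1) → Fin d) k' = m k' then 1 else 0) =
      if m k = 0 then 0 else p i k * prCounts d p i (Function.update m k (m k - 1)) := by
  simp only [← funext_iff, countsOf_snoc, add_single_one_eq_iff, prod_snoc_eq_prod_mul]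
  split_ifs with hk
  · simp [hk]
  · simp only [prCounts, ← funext_iff, mul_sum, hk, ne_eq, not_false_eq_true, true_and]
    exact sum_congr rfl fun g _ => by ring

theorem prCounts_eq_Wdp (i : ℕ) (m : Fin d → ℕ) : prCounts d p i m = Wdp d p i m := by
  induction i generalizing m with
  | zero =>
    simp [prCounts, Wdp, countsOf, funext_iff, eq_comm]
  | succ i ih =>
    rw [prCounts, sum_fun_fin_succ_eq_sum_snoc, Wdp]
    refine sum_congr rfl fun k _ => ?_
    rw [sum_snoc_weight_counts_eq, ih]

theorem prLastAndCounts_eq (i : ℕ) (k₀ : Fin d) (m : Fin d → ℕ) :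
    prLastAndCounts d p i k₀ m =
      if m k₀ = 0 then 0 else p i k₀ * Wdp d p i (Function.update m k₀ (m k₀ - 1)) := by
  rw [prLastAndCounts, sum_fun_fin_succ_eq_sum_snoc,
    sum_eq_single k₀ (fun k _ hk => by simp [Fin.snoc_last, hk]) (by simp)]
  simp only [Fin.snoc_last, true_and]
  rw [sum_snoc_weight_counts_eq, prCounts_eq_Wdp]

variable {p}

lemma prod_le_prCounts (hp0 : ∀ i k, 0 ≤ p i k) {t : ℕ} (g : Fin t → Fin d) :
    ∏ j : Fin t, p j (g j) ≤ prCounts d p t (countsOf g) := by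
  refine le_of_eq_of_le (by simp) (single_le_sum (fun g' _ => ?_) (mem_univ g))
  exact mul_nonneg (prod_nonneg fun j _ => hp0 _ _) (by split_ifs <;> norm_num)

end Probabilities

lemma qstep_cntPrefix {d ν : ℕ} (p : ℕ → Fin d → ℝ) (ℓ : Fin ν → Fin d) (i : Fin ν) :
    qstep d p i (ℓ i) (cntPrefix ℓ (i + 1)) =
      p i (ℓ i) * Wdp d p i (cntPrefix ℓ i) / Wdp d p (i + 1) (cntPrefix ℓ (i + 1)) := by
  obtain ⟨hne, hupd⟩ := (add_single_one_eq_iff _ _ _).1 (cntPrefix_succ ℓ i).symm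
  rw [qstep, if_neg hne, ← hupd]

theorem prod_qstep_cntPrefix {d ν : ℕ} {p : ℕ → Fin d → ℝ} (hp0 : ∀ i k, 0 ≤ p i k)
    (ℓ : Fin ν → Fin d) :
    ∏ i : Fin ν, qstep d p i (ℓ i) (cntPrefix ℓ (i + 1)) =
      (∏ i : Fin ν, p i (ℓ i)) / Wdp d p ν (countsOf ℓ) := by
  rw [prod_congr rfl fun i _ => qstep_cntPrefix p ℓ i]
  by_cases hz : ∃ i : Fin ν, p i (ℓ i) = 0
  · obtain ⟨i, hi⟩ := hz
    rw [prod_eq_zero (mem_univ i) (by rw [hi, zero_mul, zero_div]),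
      prod_eq_zero (mem_univ i) hi, zero_div]
  push Not at hz
  have hW : ∀ t ≤ ν, Wdp d p t (cntPrefix ℓ t) ≠ 0 := fun t ht => by
    rw [← countsOf_castLE ℓ ht, ← prCounts_eq_Wdp]
    refine (lt_of_lt_of_le ?_ (prod_le_prCounts hp0 _)).ne'
    exact prod_pos fun j _ => (hp0 _ _).lt_of_ne' (hz (Fin.castLE ht j))
  rw [prod_mul_div_telescope _ (fun t => Wdp d p t (cntPrefix ℓ t)) hW, cntPrefix_zero,
    cntPrefix_self, show Wdp d p 0 0 = 1 from if_pos rfl, mul_one]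

theorem backward_sampler_correct_general
    {d ν : ℕ} (p : ℕ → Fin d → ℝ)
    (hp0 : ∀ i k, 0 ≤ p i k)
    (m : Fin d → ℕ) :
    (∀ i < ν, ∀ m' : Fin d → ℕ, (∑ k, m' k) = i + 1 → 0 < Wdp d p (i + 1) m' →
        ∀ k, qstep d p i k m' = prLastAndCounts d p i k m' / prCounts d p (i + 1) m') ∧
    (∀ ℓ : Fin ν → Fin d, (∀ k, countsOf ℓ k = m k) →
        (∏ i : Fin ν, qstep d p (i : ℕ) (ℓ i) (cntPrefix ℓ ((i : ℕ) + 1)))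
          = (∏ i : Fin ν, p (i : ℕ) (ℓ i)) / prCounts d p ν m) := by
  refine ⟨fun i _ m' _ _ k => ?_, fun ℓ hℓ => ?_⟩
  · rw [qstep, prLastAndCounts_eq, prCounts_eq_Wdp, ite_div, zero_div]
  · rw [prod_qstep_cntPrefix hp0, prCounts_eq_Wdp, funext hℓ]

/-- **Backward conditional sampler correctness.** Fix a target counts vector `m` with
`Σ_k m k = ν` and `P(M = m) = Wdp d p ν m > 0`. Then (i) each transition probability of the
backward sampler equals the true conditional probability
`P(ℓ_{i+1} = k | M⁽ⁱ⁺¹⁾ = m')`, and (ii) for every sequence `ℓ` with counts vector `m`, the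
probability that the sampler outputs `ℓ` (the product of its transition probabilities along
the prefix counts of `ℓ`) equals the conditional probability `(Π_i p_i(ℓ_i)) / P(M = m)` of
`ℓ` given `M = m`. -/
theorem backward_sampler_correct
    {d ν : ℕ} (hd : 1 ≤ d) (p : ℕ → Fin d → ℝ)
    (hp0 : ∀ i k, 0 ≤ p i k) (hp1 : ∀ i, ∑ k, p i k = 1)
    (m : Fin d → ℕ) (hm : (∑ k, m k) = ν) (hpos : 0 < Wdp d p ν m) :
    (∀ i < ν, ∀ m' : Fin d → ℕ, (∑ k, m' k) = i + 1 → 0 < Wdp d p (i + 1) m' →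
        ∀ k, qstep d p i k m' = prLastAndCounts d p i k m' / prCounts d p (i + 1) m') ∧
    (∀ ℓ : Fin ν → Fin d, (∀ k, countsOf ℓ k = m k) →
        (∏ i : Fin ν, qstep d p (i : ℕ) (ℓ i) (cntPrefix ℓ ((i : ℕ) + 1)))
          = (∏ i : Fin ν, p (i : ℕ) (ℓ i)) / prCounts d p ν m) :=
  backward_sampler_correct_general p hp0 m
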